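/- If the service time of each of K servers is deterministic, X = c > 0, then for any relative replica start times 0 = t_1 ≤ t_2 ≤ ... ≤ t_K and Δ ≥ 0, the expected computing cost E[C(t_2,...,t_K)] = Σ_{k=1}^{K} (S - t_k)^+ + Δ·(#{k ≥ 2 : t_k < S} + 1{t_2 < S}) with S = min_k(c + t_k) = c satisfies E[C] ≥ c, with equality at t_2 = ... = t_K = ∞ (no replication). Hence the service capacity upper bound K/min E[C] equals K/c, achieved by the no-replication policy. -/
import Mathlib


/-- With K homogeneous servers of deterministic service time c > 0, the job's
service time is S = c, and for any replica start times t with t_1 = 0 ≤ t_2 ≤ ... ≤ t_K the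
expected computing cost C(t) = Σ_k (c - t_k)^+ + Δ(#{k ≥ 2 : t_k < c} + 1{t_2 < c})
satisfies C(t) ≥ c, with equality for the no-replication choice (all t_k ≥ c, k ≥ 2,
i.e. t_k = ∞). Hence min over valid t of C(t) is c and K/min C = K/c. -/
theorem stmt9 (K : ℕ) (hK : 2 ≤ K) (c Δ : ℝ) (hc : 0 < c) (hΔ : 0 ≤ Δ)
    (C : (Fin K → ℝ) → ℝ)
    (hC : ∀ t : Fin K → ℝ, C t = (∑ k : Fin K, max (c - t k) 0) +
      Δ * ((((Finset.univ.filter (fun k : Fin K => k ≠ ⟨0, by omega⟩ ∧ t k < c)).card : ℝ)) +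
        (if t ⟨1, by omega⟩ < c then 1 else 0))) :
    (∀ t : Fin K → ℝ, t ⟨0, by omega⟩ = 0 → Monotone t → c ≤ C t) ∧
    (∀ t : Fin K → ℝ, t ⟨0, by omega⟩ = 0 → Monotone t → (∀ k, k ≠ ⟨0, by omega⟩ → c ≤ t k) → C t = c) ∧
    sInf {x : ℝ | ∃ t : Fin K → ℝ, t ⟨0, by omega⟩ = 0 ∧ Monotone t ∧ C t = x} = c ∧
    (K : ℝ) / sInf {x : ℝ | ∃ t : Fin K → ℝ, t ⟨0, by omega⟩ = 0 ∧ Monotone t ∧ C t = x} = K / c := by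
  have lb : ∀ t : Fin K → ℝ, t ⟨0, by omega⟩ = 0 → c ≤ C t := by
    intro t h0
    rw [hC t]
    have h1 : c ≤ ∑ k : Fin K, max (c - t k) 0 := by
      calc c = max (c - t ⟨0, by omega⟩) 0 := by
              rw [h0]; simp [le_of_lt hc]
        _ ≤ ∑ k : Fin K, max (c - t k) 0 :=
          Finset.single_le_sum (f := fun k : Fin K => max (c - t k) 0) (fun k _ => le_max_right _ _) (Finset.mem_univ _)
    have h2 : 0 ≤ Δ * ((((Finset.univ.filter (fun k : Fin K => k ≠ ⟨0, by omega⟩ ∧ t k < c)).card : ℝ)) + (if t ⟨1, by omega⟩ < c then 1 else 0)) := by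
      apply mul_nonneg hΔ
      have : (0:ℝ) ≤ (if t ⟨1, by omega⟩ < c then (1:ℝ) else 0) := by positivity
      positivity
    linarith
  have eq1 : ∀ t : Fin K → ℝ, t ⟨0, by omega⟩ = 0 → (∀ k, k ≠ ⟨0, by omega⟩ → c ≤ t k) → C t = c := by
    intro t h0 hge
    rw [hC t]
    have hsum : ∑ k : Fin K, max (c - t k) 0 = c := by
      rw [Finset.sum_eq_single (⟨0, by omega⟩ : Fin K)]
      · rw [h0]; simp [le_of_lt hc]
      · intro k _ hk
        have := hge k hk
        simp [max_eq_right, sub_nonpos.mpr this]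
      · simp
    have hfilt : (Finset.univ.filter (fun k : Fin K => k ≠ ⟨0, by omega⟩ ∧ t k < c)) = ∅ := by
      ext k; simp only [Finset.mem_filter, Finset.mem_univ, true_and, Finset.notMem_empty, iff_false]
      rintro ⟨hk, hlt⟩
      exact absurd (hge k hk) (not_le.mpr hlt)
    have h1ne : (⟨1, by omega⟩ : Fin K) ≠ ⟨0, by omega⟩ := by simp [Fin.ext_iff]
    have : ¬ t ⟨1, by omega⟩ < c := not_lt.mpr (hge _ h1ne)
    rw [hsum, hfilt, if_neg this]
    simp
  have hmemset : c ∈ {x : ℝ | ∃ t : Fin K → ℝ, t ⟨0, by omega⟩ = 0 ∧ Monotone t ∧ C t = x} := by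
    refine ⟨fun k => if k = ⟨0, by omega⟩ then 0 else c, by simp, ?_, ?_⟩
    · intro i j hij
      by_cases hi : i = ⟨0, by omega⟩
      · by_cases hj : j = ⟨0, by omega⟩ <;> simp [hi, hj, le_of_lt hc]
      · have hj : j ≠ ⟨0, by omega⟩ := by
          intro hj; apply hi
          have : (j:ℕ) = 0 := by simp [hj]
          have : (i:ℕ) = 0 := by omega
          exact Fin.ext this
        simp [hi, hj]
    · apply eq1
      · simp
      · intro k hk; simp [hk]
  have hinf : sInf {x : ℝ | ∃ t : Fin K → ℝ, t ⟨0, by omega⟩ = 0 ∧ Monotone t ∧ C t = x} = c := by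
    apply le_antisymm
    · apply csInf_le
      · exact ⟨c, fun x ⟨t, h0, _, hx⟩ => hx ▸ lb t h0⟩
      · exact hmemset
    · apply le_csInf ⟨c, hmemset⟩
      rintro x ⟨t, h0, _, hx⟩
      exact hx ▸ lb t h0
  exact ⟨fun t h0 _ => lb t h0, fun t h0 _ hge => eq1 t h0 hge, hinf, by rw [hinf]⟩
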